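/- Let G₁ and G₂ be real Hilbert spaces and A ∈ S(G₁,G₂). Then A*A ∈ S(G₁) (i.e. A*A is positive, invertible, and 1 − A*A is Hilbert–Schmidt) and the operator (A*)⁻¹ belongs to S(G₁,G₂). -/

import Mathlib

open ContinuousLinearMap
open scoped InnerProductSpace

noncomputable section

universe u v w

/-- A bounded operator `T` between real inner product spaces is *Hilbert–Schmidt* if
`∑ᵢ ‖T eᵢ‖²` is finite for some orthonormal (Hilbert) basis `(eᵢ)`. -/
def IsHilbertSchmidt {E : Type u} {F : Type v} [NormedAddCommGroup E] [InnerProductSpace ℝ E]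
    [NormedAddCommGroup F] [InnerProductSpace ℝ F] (T : E →L[ℝ] F) : Prop :=
  ∃ (ι : Type u) (b : HilbertBasis ι ℝ E), Summable fun i => ‖T (b i)‖ ^ 2

/-- A bounded operator is invertible with a bounded inverse. -/
def IsBoundedlyInvertible {E : Type u} {F : Type v} [NormedAddCommGroup E]
    [InnerProductSpace ℝ E] [NormedAddCommGroup F] [InnerProductSpace ℝ F]
    (T : E →L[ℝ] F) : Prop :=
  ∃ S : F →L[ℝ] E, S.comp T = ContinuousLinearMap.id ℝ E ∧
    T.comp S = ContinuousLinearMap.id ℝ F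

/-- `A ∈ S(G₁,G₂)`: `A` is invertible with bounded inverse and `1 - (A*A)^{1/2}` is
Hilbert–Schmidt (`(A*A)^{1/2}` being the positive square root of `A*A`). -/
def MemS {G₁ : Type u} {G₂ : Type v}
    [NormedAddCommGroup G₁] [InnerProductSpace ℝ G₁] [CompleteSpace G₁]
    [NormedAddCommGroup G₂] [InnerProductSpace ℝ G₂] [CompleteSpace G₂]
    (A : G₁ →L[ℝ] G₂) : Prop :=
  IsBoundedlyInvertible A ∧
    ∃ S : G₁ →L[ℝ] G₁, S.IsPositive ∧
      S.comp S = (ContinuousLinearMap.adjoint A).comp A ∧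
      IsHilbertSchmidt (ContinuousLinearMap.id ℝ G₁ - S)

/-- `A ∈ S(G)`: `A` is a positive, invertible operator on `G` such that `1 - A` is
Hilbert–Schmidt. -/
def MemSG {G : Type u} [NormedAddCommGroup G] [InnerProductSpace ℝ G] [CompleteSpace G]
    (A : G →L[ℝ] G) : Prop :=
  A.IsPositive ∧ IsBoundedlyInvertible A ∧
    IsHilbertSchmidt (ContinuousLinearMap.id ℝ G - A)

/-- A family of subspaces of a real Hilbert space is mutually quasi-orthogonal if some
`A ∈ S(G)` maps them to mutually orthogonal subspaces. -/
def MutuallyQuasiOrthogonal {G : Type u} [NormedAddCommGroup G] [InnerProductSpace ℝ G]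
    [CompleteSpace G] {ι : Type w} (V : ι → Submodule ℝ G) : Prop :=
  ∃ A : G →L[ℝ] G, MemSG A ∧
    ∀ i j, i ≠ j → ∀ x ∈ V i, ∀ y ∈ V j, ⟪A x, A y⟫_ℝ = 0

/-! Let `S` be the positive square root of `A†A`. Then `1 - A†A = (1 + S)(1 - S)`, and `S` is
invertible because its square is. With `C = (A†)⁻¹`, both `S⁻¹S⁻¹` and `C†C` invert `A†A`, so `S⁻¹`
is the positive square root of `C†C`, and `1 - S⁻¹ = -S⁻¹(1 - S)`. Since Hilbert–Schmidt operators
form a left ideal, both differences are Hilbert–Schmidt. -/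

open scoped InnerProduct

lemma ContinuousLinearMap.IsPositive.of_mul_eq_one {𝕜 E : Type*} [RCLike 𝕜]
    [NormedAddCommGroup E] [InnerProductSpace 𝕜 E] {S T : E →L[𝕜] E}
    (hS : S.IsPositive) (h : S * T = 1) : T.IsPositive := by
  have hST (x : E) : S (T x) = x := congr($h x)
  refine (T.isPositive_iff).2 ⟨fun x y => ?_, fun x => ?_⟩
  · calc ⟪T x, y⟫_𝕜 = ⟪T x, S (T y)⟫_𝕜 := by rw [hST]
      _ = ⟪S (T x), T y⟫_𝕜 := (hS.inner_left_eq_inner_right _ _).symm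
      _ = ⟪x, T y⟫_𝕜 := by rw [hST]
  · simpa only [hST] using hS.inner_nonneg_right (T x)

section

variable {E : Type u} {F : Type v} {F' : Type w}
  [NormedAddCommGroup E] [InnerProductSpace ℝ E]
  [NormedAddCommGroup F] [InnerProductSpace ℝ F]
  [NormedAddCommGroup F'] [InnerProductSpace ℝ F']

lemma IsHilbertSchmidt.comp_left {T : E →L[ℝ] F} (hT : IsHilbertSchmidt T) (B : F →L[ℝ] F') :
    IsHilbertSchmidt (B ∘L T) := by
  obtain ⟨ι, b, hb⟩ := hT
  refine ⟨ι, b, .of_nonneg_of_le (fun i => by positivity) (fun i => ?_) (hb.mul_left (‖B‖ ^ 2))⟩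
  calc ‖(B ∘L T) (b i)‖ ^ 2 ≤ (‖B‖ * ‖T (b i)‖) ^ 2 := by gcongr; exact B.le_opNorm _
    _ = ‖B‖ ^ 2 * ‖T (b i)‖ ^ 2 := mul_pow _ _ _

lemma IsBoundedlyInvertible.comp {T : E →L[ℝ] F} {U : F →L[ℝ] F'}
    (hU : IsBoundedlyInvertible U) (hT : IsBoundedlyInvertible T) :
    IsBoundedlyInvertible (U ∘L T) := by
  obtain ⟨U', hU₁, hU₂⟩ := hU
  obtain ⟨T', hT₁, hT₂⟩ := hT
  refine ⟨T' ∘L U', ?_, ?_⟩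
  · rw [comp_assoc, ← comp_assoc U', hU₁, id_comp, hT₁]
  · rw [comp_assoc, ← comp_assoc T, hT₂, id_comp, hU₂]

lemma IsBoundedlyInvertible.adjoint [CompleteSpace E] [CompleteSpace F] {T : E →L[ℝ] F}
    (hT : IsBoundedlyInvertible T) : IsBoundedlyInvertible (T†) := by
  obtain ⟨T', hT₁, hT₂⟩ := hT
  exact ⟨T'†, by rw [← adjoint_comp, hT₂, adjoint_id], by rw [← adjoint_comp, hT₁, adjoint_id]⟩

lemma isBoundedlyInvertible_iff_isUnit {T : E →L[ℝ] E} : IsBoundedlyInvertible T ↔ IsUnit T := by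
  simp only [IsBoundedlyInvertible, isUnit_iff_exists, mul_def, one_def, and_comm]

end

section MemS

variable {G₁ : Type u} {G₂ : Type v}
  [NormedAddCommGroup G₁] [InnerProductSpace ℝ G₁] [CompleteSpace G₁]
  [NormedAddCommGroup G₂] [InnerProductSpace ℝ G₂] [CompleteSpace G₂]

theorem MemS.memSG_adjoint_comp_self {A : G₁ →L[ℝ] G₂} (hA : MemS A) : MemSG (A† ∘L A) := by
  obtain ⟨hAinv, S, -, hSS, hHS⟩ := hA
  refine ⟨isPositive_adjoint_comp_self A, hAinv.adjoint.comp hAinv, ?_⟩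
  have hfactor : ContinuousLinearMap.id ℝ G₁ - A† ∘L A = (ContinuousLinearMap.id ℝ G₁ + S) ∘L
      (ContinuousLinearMap.id ℝ G₁ - S) := by
    rw [← hSS]; simp only [add_comp, comp_sub, id_comp, comp_id]; abel
  rw [hfactor]
  exact hHS.comp_left _

theorem MemS.of_inverse_adjoint {A : G₁ →L[ℝ] G₂} (hA : MemS A) {C : G₁ →L[ℝ] G₂}
    (hC₁ : C ∘L A† = ContinuousLinearMap.id ℝ G₂) (hC₂ : A† ∘L C = ContinuousLinearMap.id ℝ G₁) :
    MemS C := by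
  obtain ⟨hAinv, S, hSpos, hSS, hHS⟩ := hA
  obtain ⟨S', hSS', hS'S⟩ : IsBoundedlyInvertible S := by
    rw [isBoundedlyInvertible_iff_isUnit, ← isUnit_pow_iff two_ne_zero, sq, mul_def, hSS,
      ← isBoundedlyInvertible_iff_isUnit]
    exact hAinv.adjoint.comp hAinv
  refine ⟨⟨A†, hC₂, hC₁⟩, S', hSpos.of_mul_eq_one hS'S, ?_, ?_⟩
  · have hCA : C† ∘L A = ContinuousLinearMap.id ℝ G₁ := by
      rw [← adjoint_adjoint A, ← adjoint_comp, hC₂, adjoint_id]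
    have hinv₁ : (C† ∘L C) * (S * S) = 1 := by
      rw [mul_def, mul_def, hSS, comp_assoc, ← comp_assoc C, hC₁, id_comp, hCA, one_def]
    have hinv₂ : (S * S) * (S' * S') = 1 := by
      change S * S' = 1 at hS'S
      rw [mul_assoc, ← mul_assoc S S', hS'S, one_mul, hS'S]
    exact (left_inv_eq_right_inv hinv₁ hinv₂).symm
  · have hfactor :
        ContinuousLinearMap.id ℝ G₁ - S' = (-S') ∘L (ContinuousLinearMap.id ℝ G₁ - S) := by
      rw [comp_sub, comp_id, neg_comp, hSS']; abel
    rw [hfactor]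
    exact hHS.comp_left _

end MemS

theorem memSG_adjoint_comp_and_memS_adjoint_inv {G₁ : Type u} {G₂ : Type v}
    [NormedAddCommGroup G₁] [InnerProductSpace ℝ G₁] [CompleteSpace G₁]
    [NormedAddCommGroup G₂] [InnerProductSpace ℝ G₂] [CompleteSpace G₂]
    (A : G₁ →L[ℝ] G₂) (hA : MemS A) :
    MemSG ((ContinuousLinearMap.adjoint A).comp A) ∧
      ∃ C : G₁ →L[ℝ] G₂,
        C.comp (ContinuousLinearMap.adjoint A) = ContinuousLinearMap.id ℝ G₂ ∧
        (ContinuousLinearMap.adjoint A).comp C = ContinuousLinearMap.id ℝ G₁ ∧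
        MemS C := by
  obtain ⟨C, hC₁, hC₂⟩ := hA.1.adjoint
  exact ⟨hA.memSG_adjoint_comp_self, C, hC₁, hC₂, hA.of_inverse_adjoint hC₁ hC₂⟩

end
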